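/- Let d ≥ 2 be an integer, let 0 < r < d - 1 be a real number, and let m ≥ 1 be a real number. Then for every real x with 1 ≤ x ≤ m, min((m/x)^(d-1), m^r) · x ≤ m^(1 + r(d-2)/(d-1)). -/

import Mathlib

/-!
With `θ = 1/(d-1)`, the minimum of two nonnegative numbers is at most their weighted geometric
mean, so `min((m/x)^(d-1), m^r) · x ≤ (m/x) · m^(r(1-θ)) · x = m^(1 + r(d-2)/(d-1))`: the factor
`x` cancels.
-/

open Real

theorem min_le_rpow_mul_rpow {a b θ : ℝ} (ha : 0 ≤ a) (hb : 0 ≤ b) (hθ0 : 0 ≤ θ) (hθ1 : θ ≤ 1) :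
    min a b ≤ a ^ θ * b ^ (1 - θ) := by
  have hmin : 0 ≤ min a b := le_min ha hb
  calc min a b = min a b ^ (θ + (1 - θ)) := by rw [add_sub_cancel, rpow_one]
    _ = min a b ^ θ * min a b ^ (1 - θ) := rpow_add' hmin (by norm_num)
    _ ≤ a ^ θ * b ^ (1 - θ) := by
      gcongr
      exacts [min_le_left a b, min_le_right a b]

theorem min_rpow_mul_le {m x e r : ℝ} (hm : 0 < m) (hx : 0 < x) (he : 1 ≤ e) :
    min ((m / x) ^ e) (m ^ r) * x ≤ m ^ (1 + r * (e - 1) / e) := by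
  have he0 : e ≠ 0 := by positivity
  calc min ((m / x) ^ e) (m ^ r) * x
      ≤ ((m / x) ^ e) ^ e⁻¹ * (m ^ r) ^ (1 - e⁻¹) * x := by
        gcongr
        exact min_le_rpow_mul_rpow (by positivity) (by positivity) (by positivity)
          (inv_le_one_of_one_le₀ he)
    _ = m * m ^ (r * (e - 1) / e) := by
        rw [← rpow_mul (by positivity), mul_inv_cancel₀ he0, rpow_one, ← rpow_mul hm.le]
        field_simp
    _ = m ^ (1 + r * (e - 1) / e) := by rw [rpow_add hm, rpow_one]

theorem stmt_11_general (d : ℕ) (hd : 2 ≤ d) (r : ℝ)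
    (m : ℝ) (hm : 1 ≤ m) :
    ∀ x : ℝ, 1 ≤ x → x ≤ m →
      min ((m / x) ^ ((d : ℝ) - 1)) (m ^ r) * x ≤ m ^ (1 + r * ((d : ℝ) - 2) / ((d : ℝ) - 1)) := by
  intro x hx _
  have hd' : (2 : ℝ) ≤ d := by exact_mod_cast hd
  have h := min_rpow_mul_le (m := m) (x := x) (r := r) (by linarith) (by linarith)
    (by linarith : (1 : ℝ) ≤ d - 1)
  rwa [show (d : ℝ) - 1 - 1 = d - 2 by ring] at h

theorem stmt_11 (d : ℕ) (hd : 2 ≤ d) (r : ℝ) (hr0 : 0 < r) (hr : r < (d : ℝ) - 1)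
    (m : ℝ) (hm : 1 ≤ m) :
    ∀ x : ℝ, 1 ≤ x → x ≤ m →
      min ((m / x) ^ ((d : ℝ) - 1)) (m ^ r) * x ≤ m ^ (1 + r * ((d : ℝ) - 2) / ((d : ℝ) - 1)) :=
  stmt_11_general d hd r m hm
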